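/- Let A be a self-adjoint operator on a complex Hilbert space and suppose f satisfies ‖f‖ ≤ b + a‖Af‖ with a > 0 and b ≥ 0. Then for every natural number l, if f belongs to the domain of A^(2^l), one has ‖f‖ ≤ 2^l·b + 8^(2^l − 1)·a^(2^l)·‖A^(2^l) f‖. -/

import Mathlib

/-!
Since `A` is symmetric, `‖A f‖² = ⟪f, A² f⟫ ≤ ‖f‖ ‖A² f‖`. Feeding this into `‖f‖ ≤ b + a ‖A f‖`
gives `‖f‖ ≤ 2 b + a² ‖A² f‖`, i.e. the same hypothesis for `A²` with constants `(2 b, a²)`.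
Iterating `l` times yields `‖f‖ ≤ 2^l b + a^(2^l) ‖A^(2^l) f‖`, and `8^(2^l - 1) ≥ 1`.
-/

open RCLike

lemma le_two_mul_add_sq_mul_of_le_add_mul {x y z a b : ℝ} (hx : 0 ≤ x) (hz : 0 ≤ z)
    (hyz : y ^ 2 ≤ x * z) (h : x ≤ b + a * y) : x ≤ 2 * b + a ^ 2 * z := by
  by_contra! hlt
  have haz : 0 ≤ a ^ 2 * z := by positivity
  have hx0 : 0 < x := by
    rcases hx.eq_or_lt with rfl | hpos
    · nlinarith [sq_nonneg y]
    · exact hpos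
  have hxb : 0 < x - b := by
    rcases le_or_gt b 0 with hb | hb <;> linarith
  -- `x (x - 2b) ≤ (x - b)² ≤ (a y)² ≤ a² x z`, and `x > 0`.
  have hsq : (x - b) ^ 2 ≤ a ^ 2 * (x * z) := by
    nlinarith [mul_self_le_mul_self hxb.le (by linarith : x - b ≤ a * y)]
  nlinarith [mul_pos hx0 (sub_pos.2 hlt), sq_nonneg b]

namespace LinearMap.IsSymmetric

variable {𝕜 E : Type*} [RCLike 𝕜] [NormedAddCommGroup E] [InnerProductSpace 𝕜 E]
  {T : E →ₗ[𝕜] E}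

lemma norm_apply_sq_le (hT : T.IsSymmetric) (x : E) : ‖T x‖ ^ 2 ≤ ‖x‖ * ‖T (T x)‖ :=
  calc ‖T x‖ ^ 2 = re (inner 𝕜 (T x) (T x)) := (inner_self_eq_norm_sq _).symm
    _ = re (inner 𝕜 x (T (T x))) := by rw [hT]
    _ ≤ ‖x‖ * ‖T (T x)‖ := (re_le_norm _).trans (norm_inner_le_norm _ _)

lemma norm_le_add_mul_norm_apply_apply (hT : T.IsSymmetric) {a b : ℝ} {x : E}
    (h : ‖x‖ ≤ b + a * ‖T x‖) : ‖x‖ ≤ 2 * b + a ^ 2 * ‖T (T x)‖ :=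
  le_two_mul_add_sq_mul_of_le_add_mul (norm_nonneg _) (norm_nonneg _) (hT.norm_apply_sq_le x) h

lemma norm_le_add_mul_norm_pow_two_pow_apply (hT : T.IsSymmetric) {a b : ℝ} {x : E}
    (h : ‖x‖ ≤ b + a * ‖T x‖) (l : ℕ) :
    ‖x‖ ≤ 2 ^ l * b + a ^ 2 ^ l * ‖(T ^ 2 ^ l) x‖ := by
  induction l with
  | zero => simpa using h
  | succ l ih =>
    have hsq : (T ^ 2 ^ l) ((T ^ 2 ^ l) x) = (T ^ 2 ^ (l + 1)) x := by
      rw [← Module.End.mul_apply, ← pow_add, pow_succ, mul_two]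
    calc ‖x‖ ≤ 2 * (2 ^ l * b) + (a ^ 2 ^ l) ^ 2 * ‖(T ^ 2 ^ l) ((T ^ 2 ^ l) x)‖ :=
          (hT.pow (2 ^ l)).norm_le_add_mul_norm_apply_apply ih
      _ = 2 ^ (l + 1) * b + a ^ 2 ^ (l + 1) * ‖(T ^ 2 ^ (l + 1)) x‖ := by
          rw [hsq, ← pow_mul, pow_succ 2 l]
          ring

end LinearMap.IsSymmetric

theorem stmt2_general {H : Type*} [NormedAddCommGroup H] [InnerProductSpace ℂ H]
    (A : H →ₗ[ℂ] H)
    (hsa : ∀ x y : H, (inner ℂ (A x) y : ℂ) = inner ℂ x (A y))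
    (a b : ℝ) (ha : 0 < a) (f : H)
    (hf : ‖f‖ ≤ b + a * ‖A f‖) :
    ∀ l : ℕ, ‖f‖ ≤ (2 : ℝ) ^ l * b +
      (8 : ℝ) ^ (2 ^ l - 1) * a ^ (2 ^ l) * ‖(A ^ (2 ^ l)) f‖ := by
  intro l
  have hA : A.IsSymmetric := hsa
  have h8 : 1 ≤ (8 : ℝ) ^ (2 ^ l - 1) := one_le_pow₀ (by norm_num)
  calc ‖f‖ ≤ 2 ^ l * b + a ^ 2 ^ l * ‖(A ^ 2 ^ l) f‖ :=
        hA.norm_le_add_mul_norm_pow_two_pow_apply hf l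
    _ ≤ 2 ^ l * b + 8 ^ (2 ^ l - 1) * a ^ 2 ^ l * ‖(A ^ 2 ^ l) f‖ := by
        gcongr
        exact le_mul_of_one_le_left (by positivity) h8

/-- Lemma 2: if `A` is self-adjoint (symmetric) and `‖f‖ ≤ b + a ‖A f‖` with `a > 0`,
then for all `l`, `‖f‖ ≤ 2^l b + 8^(2^l - 1) a^(2^l) ‖A^(2^l) f‖`. -/
theorem stmt2 {H : Type*} [NormedAddCommGroup H] [InnerProductSpace ℂ H]
    (A : H →ₗ[ℂ] H)
    (hsa : ∀ x y : H, (inner ℂ (A x) y : ℂ) = inner ℂ x (A y))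
    (a b : ℝ) (ha : 0 < a) (hb : 0 ≤ b) (f : H)
    (hf : ‖f‖ ≤ b + a * ‖A f‖) :
    ∀ l : ℕ, ‖f‖ ≤ (2 : ℝ) ^ l * b +
      (8 : ℝ) ^ (2 ^ l - 1) * a ^ (2 ^ l) * ‖(A ^ (2 ^ l)) f‖ :=
  stmt2_general A hsa a b ha f hf
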